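/- Let ř = D P on ℂ^n ⊗ ℂ^n with D = id − 2∑_{x>k} e_{x,x} ⊗ e_{x,x}, P the flip map. For x, y ∈ [n] define Δ(L_{x,y}) := e_{y,x} ⊗ d_x + d_y ⊗ e_{y,x} ∈ End(ℂ^n ⊗ ℂ^n), where d_z = id − 2e_{z,z} if z > k and d_z = id if z ≤ k. Then ř commutes with Δ(L_{x,y}) for all x, y ∈ [n]. -/

import Mathlib

open Matrix Kronecker BigOperators

noncomputable section

def E (n : ℕ) (x y : Fin n) : Matrix (Fin n) (Fin n) ℂ := Matrix.single x y 1

def Pmat (n : ℕ) : Matrix (Fin n × Fin n) (Fin n × Fin n) ℂ :=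
  ∑ x : Fin n, ∑ y : Fin n, E n x y ⊗ₖ E n y x

def Dmat (n k : ℕ) : Matrix (Fin n × Fin n) (Fin n × Fin n) ℂ :=
  1 - (2 : ℂ) • ∑ x ∈ Finset.univ.filter (fun x : Fin n => k ≤ (x : ℕ)), E n x x ⊗ₖ E n x x

/-- `d_z = id` if `z ≤ k` and `d_z = id − 2 e_{z,z}` if `z > k` (`0`-indexed: `z ≤ k`
means `(z : ℕ) < k`). -/
def dsmall (n k : ℕ) (z : Fin n) : Matrix (Fin n) (Fin n) ℂ :=
  if (z : ℕ) < k then 1 else 1 - (2 : ℂ) • E n z z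

/-- `Δ(L_{x,y}) = e_{y,x} ⊗ d_x + d_y ⊗ e_{y,x}`. -/
def DeltaL (n k : ℕ) (x y : Fin n) : Matrix (Fin n × Fin n) (Fin n × Fin n) ℂ :=
  E n y x ⊗ₖ dsmall n k x + dsmall n k y ⊗ₖ E n y x

/-!
Every matrix involved is built from diagonal sign matrices: `d_z` is the diagonal matrix with
entry `t z = ±1` at `z` and `1` elsewhere, and `D` is the diagonal matrix whose entry at `(a, b)`
is `d_a` at `b`, i.e. `d_b` at `a`. The flip `P` only exchanges tensor factors, so comparing the
entries of `ř Δ(L_{x,y})` and `Δ(L_{x,y}) ř` leaves products of such signs, which agree by this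
symmetry of `D` and by `t z ^ 2 = 1`.
-/

namespace GradedFlip

variable {ι R : Type*} [Fintype ι] [DecidableEq ι] [CommRing R] (t : ι → R)

def twist (z : ι) : Matrix ι ι R := diagonal fun q => if q = z then t z else 1

def pairTwist : Matrix (ι × ι) (ι × ι) R := diagonal fun p => if p.1 = p.2 then t p.1 else 1

def coproductL (x y : ι) : Matrix (ι × ι) (ι × ι) R :=
  single y x 1 ⊗ₖ twist t x + twist t y ⊗ₖ single y x 1

theorem commute_pairTwist_mul_permMatrix_coproductL (ht : ∀ z, t z * t z = 1) (x y : ι) :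
    Commute (pairTwist t * Equiv.Perm.permMatrix R (Equiv.prodComm ι ι)) (coproductL t x y) := by
  rw [Commute, SemiconjBy, mul_assoc, ← mul_assoc (coproductL t x y),
    PEquiv.mul_toMatrix_toPEquiv, PEquiv.toMatrix_toPEquiv_mul]
  ext ⟨a, b⟩ ⟨c, d⟩
  simp only [pairTwist, coproductL, twist, Equiv.coe_prodComm, Equiv.prodComm_symm, diagonal_mul,
    mul_diagonal, submatrix_apply, Prod.swap_prod_mk, id_eq, Matrix.add_apply, kroneckerMap_apply,
    single_apply, diagonal_apply, mul_ite, ite_mul, one_mul, zero_mul, mul_one, mul_zero]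
  grind

end GradedFlip

open GradedFlip

def paritySign {n : ℕ} (k : ℕ) (z : Fin n) : ℂ := if (z : ℕ) < k then 1 else -1

lemma paritySign_mul_self {n : ℕ} (k : ℕ) (z : Fin n) : paritySign k z * paritySign k z = 1 := by
  unfold paritySign
  split_ifs <;> norm_num

lemma dsmall_eq_twist (n k : ℕ) (z : Fin n) : dsmall n k z = twist (paritySign k) z := by
  ext a b
  by_cases hz : (z : ℕ) < k
  · simp [dsmall, twist, paritySign, hz, one_apply, diagonal_apply]
  · simp only [dsmall, twist, paritySign, hz, ↓reduceIte, E, smul_single, smul_eq_mul, mul_one,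
      Matrix.sub_apply, one_apply, single_apply, diagonal_apply]
    grind

lemma Dmat_eq_pairTwist (n k : ℕ) : Dmat n k = pairTwist (paritySign k) := by
  ext ⟨a, b⟩ ⟨c, d⟩
  simp only [Dmat, pairTwist, paritySign, E, Matrix.sub_apply, one_apply, Matrix.smul_apply,
    Matrix.sum_apply, kroneckerMap_apply, single_apply, diagonal_apply, ite_and, Prod.mk.injEq,
    mul_ite, mul_one, mul_zero, Finset.sum_ite_eq', Finset.mem_filter, Finset.mem_univ, true_and,
    smul_eq_mul]
  split_ifs <;> grind

lemma Pmat_eq_permMatrix (n : ℕ) :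
    Pmat n = Equiv.Perm.permMatrix ℂ (Equiv.prodComm (Fin n) (Fin n)) := by
  ext ⟨a, b⟩ ⟨c, d⟩
  simp only [Pmat, E, Matrix.sum_apply, kroneckerMap_apply, single_apply, ite_and, eq_comm,
    mul_ite, mul_one, mul_zero, Finset.sum_ite_eq, Finset.mem_univ, ↓reduceIte,
    PEquiv.toMatrix_apply, Equiv.toPEquiv_apply, Equiv.prodComm_apply, Prod.swap_prod_mk,
    Option.mem_def, Option.some.injEq, Prod.mk.injEq]
  split_ifs <;> rfl

lemma DeltaL_eq_coproductL (n k : ℕ) (x y : Fin n) :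
    DeltaL n k x y = coproductL (paritySign k) x y := by
  simp only [DeltaL, coproductL, dsmall_eq_twist, E]

theorem stmt8_general (n k : ℕ) (x y : Fin n) :
    (Dmat n k * Pmat n) * DeltaL n k x y = DeltaL n k x y * (Dmat n k * Pmat n) := by
  rw [Dmat_eq_pairTwist, Pmat_eq_permMatrix, DeltaL_eq_coproductL]
  exact commute_pairTwist_mul_permMatrix_coproductL _ (paritySign_mul_self k) x y

theorem stmt8 (n k m : ℕ) (hn : n = k + m) (x y : Fin n) :
    (Dmat n k * Pmat n) * DeltaL n k x y = DeltaL n k x y * (Dmat n k * Pmat n) :=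
  stmt8_general n k x y
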